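/- Let λ > 0 and let h be a solution of the cycloid equation (∗) with parameter λ; define γ(θ) := h(θ)·p(θ) + (h′(θ)/[q(θ), q′(θ)])·q(θ). Then [γ(θ), γ′(θ)] = (1 − λ)·h(θ)²·[p(θ), p′(θ)] for all θ. In particular [γ(θ), γ′(θ)] ≥ 0 for all θ if 0 < λ < 1 (epicycloids are positively oriented), and [γ(θ), γ′(θ)] ≤ 0 for all θ if λ > 1 (hypocycloids are negatively oriented). -/

import Mathlib

open Real MeasureTheory

noncomputable section

/-- Determinant of two plane vectors: `[a, b] = a₁b₂ − a₂b₁`. -/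
def det2 (a b : ℝ × ℝ) : ℝ := a.1 * b.2 - a.2 * b.1

/-- The dual parameterization `q(θ) = p′(θ)/[p(θ), p′(θ)]`. -/
def dualQ (p : ℝ → ℝ × ℝ) : ℝ → ℝ × ℝ :=
  fun θ => (det2 (p θ) (deriv p θ))⁻¹ • deriv p θ

/-- `p` is a smooth, symmetric, quadratically convex parameterization of the
unit circle of a normed plane, by the angle its tangent makes with a fixed direction. -/
def IsUnitCircle (p : ℝ → ℝ × ℝ) : Prop :=
  ContDiff ℝ (⊤ : ℕ∞) p ∧ (∀ θ, p (θ + π) = -p θ) ∧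
  (∀ θ, 0 < det2 (p θ) (deriv p θ)) ∧
  (∀ θ, 0 < det2 (deriv p θ) (deriv (deriv p) θ))

/-- `u` is a solution of the cycloid equation
`(1/[p,p'])·(u'/[q,q'])' = −λ·u` for the normed plane with unit circle `p`. -/
def IsCycloidSol (p : ℝ → ℝ × ℝ) (lam : ℝ) (u : ℝ → ℝ) : Prop :=
  ContDiff ℝ 2 u ∧
  ∀ θ, (det2 (p θ) (deriv p θ))⁻¹ *
      deriv (fun t => deriv u t / det2 (dualQ p t) (deriv (dualQ p) t)) θ = -lam * u θ

lemma hasDerivAt_fst' {f : ℝ → ℝ × ℝ} {f' : ℝ × ℝ} {x : ℝ}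
    (hf : HasDerivAt f f' x) : HasDerivAt (fun t => (f t).1) f'.1 x := by
  simpa using (hf.hasFDerivAt.fst).hasDerivAt

lemma hasDerivAt_snd' {f : ℝ → ℝ × ℝ} {f' : ℝ × ℝ} {x : ℝ}
    (hf : HasDerivAt f f' x) : HasDerivAt (fun t => (f t).2) f'.2 x := by
  simpa using (hf.hasFDerivAt.snd).hasDerivAt

lemma hasDerivAt_det2 {f g : ℝ → ℝ × ℝ} {f' g' : ℝ × ℝ} {x : ℝ}
    (hf : HasDerivAt f f' x) (hg : HasDerivAt g g' x) :
    HasDerivAt (fun t => det2 (f t) (g t)) (det2 f' (g x) + det2 (f x) g') x := by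
  have := ((hasDerivAt_fst' hf).mul (hasDerivAt_snd' hg)).sub
    ((hasDerivAt_snd' hf).mul (hasDerivAt_fst' hg))
  exact this.congr_deriv (by unfold det2; ring)

lemma contDiff_det2 {f g : ℝ → ℝ × ℝ} (hf : ContDiff ℝ (⊤ : ℕ∞) f)
    (hg : ContDiff ℝ (⊤ : ℕ∞) g) :
    ContDiff ℝ (⊤ : ℕ∞) (fun t => det2 (f t) (g t)) := by
  unfold det2
  exact ((contDiff_fst.comp hf).mul (contDiff_snd.comp hg)).sub
    ((contDiff_snd.comp hf).mul (contDiff_fst.comp hg))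

example (f : ℝ → ℝ) (hf : ContDiff ℝ (⊤ : ℕ∞) f) : Differentiable ℝ f := by
  exact hf.differentiable (by simp)

set_option maxHeartbeats 1000000 in
/-- orientation of cycloids: if `h` solves the cycloid equation with
`λ > 0` and `γ = h·p + (h'/[q,q'])·q`, then `[γ, γ'] = (1-λ)·h²·[p,p']`; epicycloids
(`0 < λ < 1`) are positively oriented and hypocycloids (`λ > 1`) negatively. -/
theorem stmt_11 (p : ℝ → ℝ × ℝ) (hP : IsUnitCircle p)
    (lam : ℝ) (hlam : 0 < lam)
    (h : ℝ → ℝ) (hsol : IsCycloidSol p lam h)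
    (γ : ℝ → ℝ × ℝ)
    (hγ : ∀ θ, γ θ = h θ • p θ +
      (deriv h θ / det2 (dualQ p θ) (deriv (dualQ p) θ)) • dualQ p θ) :
    (∀ θ, det2 (γ θ) (deriv γ θ) = (1 - lam) * (h θ) ^ 2 * det2 (p θ) (deriv p θ)) ∧
    (lam < 1 → ∀ θ, 0 ≤ det2 (γ θ) (deriv γ θ)) ∧
    (1 < lam → ∀ θ, det2 (γ θ) (deriv γ θ) ≤ 0) := by
  obtain ⟨hpC0, -, hPpos, hW⟩ := hP
  obtain ⟨hhC, hode⟩ := hsol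
  have hγfun : γ = fun t => h t • p t +
      (deriv h t / det2 (dualQ p t) (deriv (dualQ p) t)) • dualQ p t := funext hγ
  subst hγfun
  have hpC : ContDiff ℝ (⊤ : ℕ∞) p := hpC0.of_le (by simp)
  have hpd : Differentiable ℝ p := hpC.differentiable (by simp)
  have hp'C : ContDiff ℝ (⊤ : ℕ∞) (deriv p) := (contDiff_infty_iff_deriv.mp hpC).2
  have hp'd : Differentiable ℝ (deriv p) := hp'C.differentiable (by simp)
  have hPne : ∀ t, det2 (p t) (deriv p t) ≠ 0 := fun t => (hPpos t).ne'
  have hPfC : ContDiff ℝ (⊤ : ℕ∞) (fun t => det2 (p t) (deriv p t)) := contDiff_det2 hpC hp'C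
  have hqC : ContDiff ℝ (⊤ : ℕ∞) (dualQ p) := by
    unfold dualQ
    exact (hPfC.inv hPne).smul hp'C
  have hqd : Differentiable ℝ (dualQ p) := hqC.differentiable (by simp)
  have hq'C : ContDiff ℝ (⊤ : ℕ∞) (deriv (dualQ p)) := (contDiff_infty_iff_deriv.mp hqC).2
  have hQfC : ContDiff ℝ (⊤ : ℕ∞) (fun t => det2 (dualQ p t) (deriv (dualQ p) t)) :=
    contDiff_det2 hqC hq'C
  have hQfd : Differentiable ℝ (fun t => det2 (dualQ p t) (deriv (dualQ p) t)) :=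
    hQfC.differentiable (by simp)
  have hh'C : ContDiff ℝ 1 (deriv h) := by
    have h2 : ContDiff ℝ ((1 : WithTop ℕ∞) + 1) h := by norm_num; exact hhC
    exact (contDiff_succ_iff_deriv.mp h2).2.2
  have hh'd : Differentiable ℝ (deriv h) := hh'C.differentiable one_ne_zero
  have hhd : Differentiable ℝ h := hhC.differentiable two_ne_zero
  have key : ∀ θ, det2 ((fun t => h t • p t +
        (deriv h t / det2 (dualQ p t) (deriv (dualQ p) t)) • dualQ p t) θ)
      (deriv (fun t => h t • p t +
        (deriv h t / det2 (dualQ p t) (deriv (dualQ p) t)) • dualQ p t) θ)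
      = (1 - lam) * (h θ) ^ 2 * det2 (p θ) (deriv p θ) := by
    intro θ
    have hp1 : HasDerivAt p (deriv p θ) θ := (hpd θ).hasDerivAt
    have hp2 : HasDerivAt (deriv p) (deriv (deriv p) θ) θ := (hp'd θ).hasDerivAt
    have hPf : HasDerivAt (fun t => det2 (p t) (deriv p t))
        (det2 (deriv p θ) (deriv p θ) + det2 (p θ) (deriv (deriv p) θ)) θ :=
      hasDerivAt_det2 hp1 hp2
    have hinv : HasDerivAt (fun t => (det2 (p t) (deriv p t))⁻¹)
        (-(det2 (deriv p θ) (deriv p θ) + det2 (p θ) (deriv (deriv p) θ)) /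
          (det2 (p θ) (deriv p θ)) ^ 2) θ := hPf.inv (hPne θ)
    have hq : HasDerivAt (dualQ p)
        ((det2 (p θ) (deriv p θ))⁻¹ • deriv (deriv p) θ +
         (-(det2 (deriv p θ) (deriv p θ) + det2 (p θ) (deriv (deriv p) θ)) /
           (det2 (p θ) (deriv p θ)) ^ 2) • deriv p θ) θ := by
      unfold dualQ
      exact hinv.smul hp2
    have hq' := hq.deriv
    have hQval : det2 (dualQ p θ) (deriv (dualQ p) θ)
        = det2 (deriv p θ) (deriv (deriv p) θ) / (det2 (p θ) (deriv p θ)) ^ 2 := by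
      have hDne : (p θ).1 * (deriv p θ).2 - (p θ).2 * (deriv p θ).1 ≠ 0 := by
        simpa [det2] using hPne θ
      rw [hq']
      simp only [dualQ, det2, Prod.smul_fst, Prod.smul_snd, Prod.fst_add, Prod.snd_add,
        smul_eq_mul]
      field_simp
      ring
    have hQne : det2 (dualQ p θ) (deriv (dualQ p) θ) ≠ 0 := by
      rw [hQval]
      exact (div_pos (hW θ) (pow_pos (hPpos θ) 2)).ne'
    have hvf : HasDerivAt (fun t => deriv h t / det2 (dualQ p t) (deriv (dualQ p) t))
        (deriv (fun t => deriv h t / det2 (dualQ p t) (deriv (dualQ p) t)) θ) θ :=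
      (((hh'd θ).div (hQfd θ) hQne)).hasDerivAt
    have hv' : deriv (fun t => deriv h t / det2 (dualQ p t) (deriv (dualQ p) t)) θ
        = -lam * h θ * det2 (p θ) (deriv p θ) := by
      have h0 := hode θ
      field_simp [hPne θ] at h0
      linarith
    have hγd : HasDerivAt (fun t => h t • p t +
        (deriv h t / det2 (dualQ p t) (deriv (dualQ p) t)) • dualQ p t)
        ((h θ • deriv p θ + deriv h θ • p θ) +
         ((deriv h θ / det2 (dualQ p θ) (deriv (dualQ p) θ)) •
            ((det2 (p θ) (deriv p θ))⁻¹ • deriv (deriv p) θ +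
             (-(det2 (deriv p θ) (deriv p θ) + det2 (p θ) (deriv (deriv p) θ)) /
               (det2 (p θ) (deriv p θ)) ^ 2) • deriv p θ) +
          (deriv (fun t => deriv h t / det2 (dualQ p t) (deriv (dualQ p) t)) θ) •
            dualQ p θ)) θ :=
      ((hhd θ).hasDerivAt.smul hp1).add (hvf.smul hq)
    rw [hγd.deriv, hQval, hv']
    have hDne : (p θ).1 * (deriv p θ).2 - (p θ).2 * (deriv p θ).1 ≠ 0 := by
      simpa [det2] using hPne θ
    have hWne : (deriv p θ).1 * (deriv (deriv p) θ).2 -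
        (deriv p θ).2 * (deriv (deriv p) θ).1 ≠ 0 := by
      simpa [det2] using (hW θ).ne'
    simp only [dualQ, det2, Prod.smul_fst, Prod.smul_snd, Prod.fst_add, Prod.snd_add,
      smul_eq_mul]
    field_simp
    ring
  refine ⟨key, fun hl θ => ?_, fun hl θ => ?_⟩
  · rw [key θ]
    have h3 : (0:ℝ) ≤ (h θ) ^ 2 * det2 (p θ) (deriv p θ) :=
      mul_nonneg (sq_nonneg _) (hPpos θ).le
    nlinarith [h3]
  · rw [key θ]
    have h3 : (0:ℝ) ≤ (h θ) ^ 2 * det2 (p θ) (deriv p θ) :=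
      mul_nonneg (sq_nonneg _) (hPpos θ).le
    nlinarith [h3]
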